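/- The total winding angle on the square root spiral between the square number m² and the square number (m+3)², which lies one wind later on the same of the three square-number spiral arms, tends to 6 radians: lim_{m→∞} Σ_{n=m²+1}^{(m+3)²} arctan(1/√n) = 6; consequently the angle between the square numbers on two successive winds strives for 2π − 6 (i.e. 360° − 3·(360°/π)). -/

import Mathlib

open Filter Finset Real

/-!
Since `arctan t = t + O(t³)` and `2 (√(k+1) - √k) = 1/√(k+1) + O(1/k)`, the angle
`arctan (1/√(k+1))` differs from `2√(k+1) - 2√k` by at most `2/(k+1)`. Summing over the
`6m + 9` indices `m² ≤ k < (m+3)²`, the main terms telescope to `2(m+3) - 2m = 6`, while the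
errors add up to at most `(6m + 9) · 2/(m² + 1) = O(1/m)`.
-/

namespace Real

theorem arctan_le_self {x : ℝ} (hx : 0 ≤ x) : arctan x ≤ x := by
  simpa only [tan_arctan] using le_tan (arctan_nonneg.2 hx) (arctan_lt_pi_div_two x)

theorem sub_pow_three_div_three_le_arctan {x : ℝ} (hx : 0 ≤ x) :
    x - x ^ 3 / 3 ≤ arctan x := by
  have hderiv (y : ℝ) :
      HasDerivAt (fun y ↦ arctan y - (y - y ^ 3 / 3)) (y ^ 4 / (1 + y ^ 2)) y :=
    ((hasDerivAt_arctan y).sub ((hasDerivAt_id' y).sub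
      ((hasDerivAt_pow 3 y).div_const 3))).congr_deriv (by field_simp; ring)
  have hmono : Monotone (fun y ↦ arctan y - (y - y ^ 3 / 3)) :=
    monotone_of_deriv_nonneg (fun y ↦ (hderiv y).differentiableAt)
      (fun y ↦ (hderiv y).deriv ▸ by positivity)
  simpa using hmono hx

theorem one_div_sqrt_add_one_le_two_mul_sqrt_add_one_sub_sqrt {x : ℝ} (hx : 0 ≤ x) :
    1 / √(x + 1) ≤ 2 * (√(x + 1) - √x) := by
  rw [div_le_iff₀ (sqrt_pos.2 (by linarith))]
  nlinarith [sq_sqrt hx, sq_sqrt (by linarith : 0 ≤ x + 1), sq_nonneg (√(x + 1) - √x)]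

theorem two_mul_sqrt_add_one_sub_sqrt_le {x : ℝ} (hx : 0 ≤ x) :
    2 * (√(x + 1) - √x) ≤ 1 / √(x + 1) + 1 / (x + 1) := by
  have htq := sq_sqrt (by linarith : 0 ≤ x + 1)
  have hsq := sq_sqrt hx
  have h1 : 1 ≤ √(x + 1) := one_le_sqrt.2 (by linarith)
  have hst : √x ≤ √(x + 1) := sqrt_le_sqrt (by linarith)
  set t := √(x + 1)
  set s := √x
  have hs : 0 ≤ s := sqrt_nonneg x
  -- `(t - s) (t + s) = 1` turns the claim into `t² ≤ t s + t + s`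
  have key : 0 ≤ t * (t - s) * (t * s + t + s - t ^ 2) :=
    mul_nonneg (by nlinarith) (by nlinarith)
  rw [← htq, div_add_div _ _ (by positivity) (by positivity), le_div_iff₀ (by positivity)]
  nlinarith

theorem abs_arctan_one_div_sqrt_sub_le {x : ℝ} (hx : 0 ≤ x) :
    |arctan (1 / √(x + 1)) - 2 * (√(x + 1) - √x)| ≤ 2 / (x + 1) := by
  have hd_lower := one_div_sqrt_add_one_le_two_mul_sqrt_add_one_sub_sqrt hx
  have hd_upper := two_mul_sqrt_add_one_sub_sqrt_le hx
  set u := 1 / √(x + 1)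
  have hu0 : 0 ≤ u := by positivity
  have hu1 : u ≤ 1 := div_le_one_of_le₀ (one_le_sqrt.2 (by linarith)) (sqrt_nonneg _)
  have hu2 : u ^ 2 = 1 / (x + 1) := by rw [div_pow, sq_sqrt (by linarith), one_pow]
  have hcube : u ^ 3 / 3 ≤ u ^ 2 := by nlinarith [pow_nonneg hu0 2]
  have hupper := arctan_le_self hu0
  have hlower := sub_pow_three_div_three_le_arctan hu0
  have htwo : 2 / (x + 1) = 2 * (1 / (x + 1)) := by ring
  rw [abs_le]
  constructor <;> linarith

end Real

theorem Finset.norm_sum_Ico_sub_sub_le {E : Type*} [SeminormedAddCommGroup E] (f g : ℕ → E)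
    {a b : ℕ} (hab : a ≤ b) :
    ‖∑ k ∈ Ico a b, g k - (f b - f a)‖ ≤
      ∑ k ∈ Ico a b, ‖g k - (f (k + 1) - f k)‖ := by
  rw [← sum_Ico_sub f hab, ← sum_sub_distrib]
  exact norm_sum_le _ _

theorem abs_sum_arctan_one_div_sqrt_sub_six_le (m : ℕ) :
    |∑ n ∈ Icc (m ^ 2 + 1) ((m + 3) ^ 2), arctan (1 / √((n : ℕ) : ℝ)) - 6| ≤
      30 / (m + 1) := by
  have hle : m ^ 2 ≤ (m + 3) ^ 2 := Nat.pow_le_pow_left (by omega) 2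
  have hreindex : ∑ n ∈ Icc (m ^ 2 + 1) ((m + 3) ^ 2), arctan (1 / √((n : ℕ) : ℝ))
      = ∑ k ∈ Ico (m ^ 2) ((m + 3) ^ 2), arctan (1 / √((k : ℝ) + 1)) := by
    rw [← Ico_add_one_right_eq_Icc, ← sum_Ico_add']
    push_cast
    rfl
  have htelescope : 2 * √(((m + 3) ^ 2 : ℕ) : ℝ) - 2 * √((m ^ 2 : ℕ) : ℝ) = 6 := by
    push_cast
    rw [sqrt_sq (by positivity), sqrt_sq (by positivity)]
    ring
  have hterm (k : ℕ) (hk : k ∈ Ico (m ^ 2) ((m + 3) ^ 2)) :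
      |arctan (1 / √((k : ℝ) + 1)) - (2 * √((k + 1 : ℕ) : ℝ) - 2 * √(k : ℝ))|
        ≤ 2 / ((m : ℝ) ^ 2 + 1) := by
    have hmk : (m : ℝ) ^ 2 ≤ k := by exact_mod_cast (mem_Ico.1 hk).1
    push_cast
    rw [← mul_sub]
    exact (abs_arctan_one_div_sqrt_sub_le k.cast_nonneg).trans
      (div_le_div_of_nonneg_left zero_le_two (by positivity) (by linarith))
  calc |∑ n ∈ Icc (m ^ 2 + 1) ((m + 3) ^ 2), arctan (1 / √((n : ℕ) : ℝ)) - 6|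
      ≤ ∑ k ∈ Ico (m ^ 2) ((m + 3) ^ 2),
          |arctan (1 / √((k : ℝ) + 1)) -
            (2 * √((k + 1 : ℕ) : ℝ) - 2 * √(k : ℝ))| := by
        rw [hreindex, ← htelescope]
        exact norm_sum_Ico_sub_sub_le (fun k : ℕ ↦ 2 * √(k : ℝ)) _ hle
    _ ≤ (6 * m + 9) * (2 / ((m : ℝ) ^ 2 + 1)) := by
        refine (sum_le_card_nsmul _ _ _ hterm).trans_eq ?_
        rw [Nat.card_Ico, nsmul_eq_mul, Nat.cast_sub hle]
        push_cast
        ring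
    _ ≤ 30 / (m + 1) := by
        rw [mul_div_assoc', div_le_div_iff₀ (by positivity) (by positivity)]
        rcases m.eq_zero_or_pos with rfl | hm
        · norm_num
        · have hm_one : (1 : ℝ) ≤ m := by exact_mod_cast hm
          nlinarith

/-- The total winding angle between the square number `m²` and the square
number `(m+3)²` (one wind later, on the same square-number spiral arm) tends
to `6` radians; consequently the angle between the square numbers on two
successive winds strives for `2π − 6`. -/
theorem angle_between_squares_on_successive_winds :
    Tendsto
      (fun m : ℕ =>
        ∑ n ∈ (Finset.Icc (m ^ 2 + 1) ((m + 3) ^ 2) : Finset ℕ),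
          Real.arctan (1 / Real.sqrt n))
      atTop (nhds 6) ∧
    Tendsto
      (fun m : ℕ =>
        2 * Real.pi -
          ∑ n ∈ (Finset.Icc (m ^ 2 + 1) ((m + 3) ^ 2) : Finset ℕ),
            Real.arctan (1 / Real.sqrt n))
      atTop (nhds (2 * Real.pi - 6)) := by
  have hsix : Tendsto
      (fun m : ℕ ↦ ∑ n ∈ Icc (m ^ 2 + 1) ((m + 3) ^ 2), arctan (1 / √((n : ℕ) : ℝ)))
      atTop (nhds 6) := by
    rw [tendsto_iff_norm_sub_tendsto_zero]
    refine squeeze_zero (fun _ ↦ norm_nonneg _) abs_sum_arctan_one_div_sqrt_sub_six_le ?_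
    simpa [div_eq_mul_inv] using
      (tendsto_one_div_add_atTop_nhds_zero_nat (𝕜 := ℝ)).const_mul 30
  exact ⟨hsix, tendsto_const_nhds.sub hsix⟩
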